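/- The map h, which sends each positive definite real symmetric n×n matrix V to the unique positive definite matrix in C maximizing f(Θ; V) over positive definite Θ ∈ C, is continuous on the open cone of positive definite real symmetric n×n matrices. -/

import Mathlib

open Matrix

/-- `maxProp n Z V Θ` says that `Θ` is a positive definite matrix in the constraint set
`C = {Θ symmetric : Θ_ij = 0 for (i,j) ∈ Z}` maximizing `f(·; V) = log det · − tr (V ·)`
over positive definite matrices in `C`. -/
def maxProp (n : ℕ) (Z : Set (Fin n × Fin n)) (V Θ : Matrix (Fin n) (Fin n) ℝ) : Prop :=
  Θ.PosDef ∧ (∀ p ∈ Z, Θ p.1 p.2 = 0) ∧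
    ∀ Θ' : Matrix (Fin n) (Fin n) ℝ, Θ'.PosDef → (∀ p ∈ Z, Θ' p.1 p.2 = 0) →
      Real.log Θ'.det - (V * Θ').trace ≤ Real.log Θ.det - (V * Θ).trace

/-!
Near a positive definite `V₀` the matrices `V` are uniformly coercive: `c · tr Θ ≤ tr (V Θ)` for
all `Θ ⪰ 0`. Comparing with the feasible point `Θ = 1` gives `f(h V; V) ≥ -tr V`; combined with
`log det Θ ≤ s · tr Θ - n (1 + log s)` (from `log x ≤ x - 1` on eigenvalues) this confines `h V`,
for `V` near `V₀`, to a compact set of positive definite matrices with bounded trace and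
determinant bounded away from `0`. On that set the objective is jointly continuous, so every
cluster point of `h` at `V₀` maximizes `f(·; V₀)`, and the maximizer is unique because `log det`
is strictly concave: after a congruence making `(A + B) / 2 = 1`, this is
`log det X < tr X - n` for `X ≠ 1`.
-/

open Filter Topology

namespace Matrix

variable {ι : Type*} [Fintype ι] {A B : Matrix ι ι ℝ}

theorem PosSemidef.abs_apply_le_trace (hA : A.PosSemidef) (i j : ι) : |A i j| ≤ A.trace := by
  have hdiag (k : ι) : A k k ≤ A.trace :=
    Finset.single_le_sum (f := fun l => A l l) (fun l _ => hA.diag_nonneg) (Finset.mem_univ k)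
  have hminor := (hA.submatrix ![i, j]).det_nonneg
  have hsymm : A j i = A i j := by simpa using congrFun₂ hA.isHermitian i j
  simp only [det_fin_two, submatrix_apply, Matrix.cons_val_zero, Matrix.cons_val_one, hsymm]
    at hminor
  have hprod : A i i * A j j ≤ A.trace ^ 2 :=
    (mul_le_mul (hdiag i) (hdiag j) hA.diag_nonneg hA.trace_nonneg).trans_eq (sq _).symm
  exact abs_le.mpr (abs_le_of_sq_le_sq' (by nlinarith) hA.trace_nonneg)

theorem PosSemidef.abs_trace_mul_le (hA : A.PosSemidef) (E : Matrix ι ι ℝ) :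
    |(E * A).trace| ≤ (∑ i, ∑ j, |E i j|) * A.trace := by
  rw [Finset.sum_mul, trace]
  refine (Finset.abs_sum_le_sum_abs _ _).trans (Finset.sum_le_sum fun i _ => ?_)
  rw [diag_apply, mul_apply, Finset.sum_mul]
  refine (Finset.abs_sum_le_sum_abs _ _).trans (Finset.sum_le_sum fun j _ => ?_)
  rw [abs_mul]
  exact mul_le_mul_of_nonneg_left (hA.abs_apply_le_trace j i) (abs_nonneg _)

theorem isClosed_setOf_posSemidef : IsClosed {A : Matrix ι ι ℝ | A.PosSemidef} := by
  simp only [posSemidef_iff_dotProduct_mulVec, Set.ofPred_and, Set.ofPred_forall]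
  exact (isClosed_eq (by fun_prop) continuous_id).inter
    (isClosed_iInter fun x => isClosed_le continuous_const (by fun_prop))

theorem isCompact_setOf_posSemidef_trace_le (T : ℝ) :
    IsCompact {A : Matrix ι ι ℝ | A.PosSemidef ∧ A.trace ≤ T} := by
  have hbox : IsCompact (Set.univ.pi fun _ : ι => Set.univ.pi fun _ : ι => Set.Icc (-T) T) :=
    isCompact_univ_pi fun _ => isCompact_univ_pi fun _ => isCompact_Icc
  refine hbox.of_isClosed_subset
    (isClosed_setOf_posSemidef.inter (isClosed_le continuous_id.matrix_trace continuous_const)) ?_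
  rintro A ⟨hA, hT⟩
  simp only [Set.mem_pi, Set.mem_univ, true_implies]
  exact fun i j => abs_le.mp ((hA.abs_apply_le_trace i j).trans hT)

theorem eventually_half_mul_trace_le_trace_mul {c : ℝ} (hc : 0 < c)
    (hA : ∀ Θ : Matrix ι ι ℝ, Θ.PosSemidef → c * Θ.trace ≤ (A * Θ).trace) :
    ∀ᶠ V in 𝓝 A, ∀ Θ : Matrix ι ι ℝ, Θ.PosSemidef → c / 2 * Θ.trace ≤ (V * Θ).trace := by
  have hsmall : ∀ᶠ V in 𝓝 A, ∑ i, ∑ j, |(V - A) i j| < c / 2 := by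
    have : Continuous fun V : Matrix ι ι ℝ => ∑ i, ∑ j, |(V - A) i j| := by fun_prop
    exact this.tendsto' A 0 (by simp) |>.eventually (gt_mem_nhds (half_pos hc))
  filter_upwards [hsmall] with V hV Θ hΘ
  have hsplit : (V * Θ).trace = (A * Θ).trace + ((V - A) * Θ).trace := by
    rw [Matrix.sub_mul, trace_sub]; ring
  have := (abs_le.mp (hΘ.abs_trace_mul_le (V - A))).1
  nlinarith [hA Θ hΘ, hΘ.trace_nonneg]

section DecidableEq

variable [DecidableEq ι]

open scoped MatrixOrder in
theorem PosDef.exists_isUnit_conjTranspose_mul_mul_eq_one (hA : A.PosDef) :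
    ∃ P : Matrix ι ι ℝ, IsUnit P ∧ Pᴴ * A * P = 1 := by
  obtain ⟨R, hR, rfl⟩ :=
    CStarAlgebra.isStrictlyPositive_iff_eq_star_mul_self.mp hA.isStrictlyPositive
  refine ⟨R⁻¹, isUnit_nonsing_inv_iff.mpr hR, ?_⟩
  rw [star_eq_conjTranspose, ← Matrix.mul_assoc, ← conjTranspose_mul, Matrix.mul_assoc,
    mul_nonsing_inv R ((isUnit_iff_isUnit_det R).mp hR), conjTranspose_one, Matrix.one_mul]

open scoped MatrixOrder in
theorem PosDef.exists_pos_mul_trace_le_trace_mul (hA : A.PosDef) :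
    ∃ c > 0, ∀ Θ : Matrix ι ι ℝ, Θ.PosSemidef → c * Θ.trace ≤ (A * Θ).trace := by
  obtain ⟨R, hR, rfl⟩ :=
    CStarAlgebra.isStrictlyPositive_iff_eq_star_mul_self.mp hA.isStrictlyPositive
  rw [star_eq_conjTranspose]
  have hRdet : IsUnit R.det := (isUnit_iff_isUnit_det R).mp hR
  set C := ∑ i, ∑ j, |(R⁻¹ᴴ * R⁻¹) i j|
  have hC : 0 ≤ C := by positivity
  refine ⟨(C + 1)⁻¹, by positivity, fun Θ hΘ => ?_⟩
  have hM := hΘ.mul_mul_conjTranspose_same R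
  -- `Θ = R⁻¹ (R Θ Rᴴ) R⁻¹ᴴ`, so `tr Θ` is controlled by `tr (R Θ Rᴴ) = tr (Rᴴ R Θ)`
  have hΘM : Θ.trace = (R⁻¹ᴴ * R⁻¹ * (R * Θ * Rᴴ)).trace := by
    have : R⁻¹ * (R * Θ * Rᴴ) * R⁻¹ᴴ = Θ := by
      rw [← Matrix.mul_assoc, ← Matrix.mul_assoc, nonsing_inv_mul R hRdet, Matrix.one_mul,
        Matrix.mul_assoc, ← conjTranspose_mul, nonsing_inv_mul R hRdet, conjTranspose_one,
        Matrix.mul_one]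
    conv_lhs => rw [← this]
    exact trace_mul_cycle _ _ _
  have hAM : (Rᴴ * R * Θ).trace = (R * Θ * Rᴴ).trace := by
    rw [Matrix.mul_assoc, trace_mul_comm]
  have hbound : Θ.trace ≤ C * (R * Θ * Rᴴ).trace :=
    hΘM ▸ (le_abs_self _).trans (hM.abs_trace_mul_le _)
  rw [hAM, inv_mul_le_iff₀ (by positivity)]
  nlinarith [hM.trace_nonneg]

theorem PosDef.log_det_lt_trace_sub_card (hA : A.PosDef) (hA1 : A ≠ 1) :
    Real.log A.det < A.trace - Fintype.card ι := by
  set μ := hA.isHermitian.eigenvalues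
  have hpos : ∀ i, 0 < μ i := hA.eigenvalues_pos
  obtain ⟨i₀, hi₀⟩ : ∃ i, μ i ≠ 1 := by
    by_contra! h
    have hμ : μ = 1 := funext h
    apply hA1
    rw [hA.isHermitian.spectral_theorem]
    simp [μ] at hμ
    simp [hμ]
  rw [hA.isHermitian.det_eq_prod_eigenvalues, hA.isHermitian.trace_eq_sum_eigenvalues]
  simp only [RCLike.ofReal_real_eq_id, id]
  rw [Real.log_prod fun i _ => (hpos i).ne', Fintype.card_eq_sum_ones, Nat.cast_sum, Nat.cast_one,
    ← Finset.sum_sub_distrib]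
  exact Finset.sum_lt_sum (fun i _ => Real.log_le_sub_one_of_pos (hpos i))
    ⟨i₀, Finset.mem_univ _, Real.log_lt_sub_one_of_pos (hpos i₀) hi₀⟩

theorem PosDef.log_det_le_trace_sub_card (hA : A.PosDef) :
    Real.log A.det ≤ A.trace - Fintype.card ι := by
  rcases eq_or_ne A 1 with rfl | hA1
  · simp
  · exact (hA.log_det_lt_trace_sub_card hA1).le

theorem PosDef.log_det_le_mul_trace {s : ℝ} (hA : A.PosDef) (hs : 0 < s) :
    Real.log A.det ≤ s * A.trace - Fintype.card ι * (1 + Real.log s) := by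
  have := (hA.smul hs).log_det_le_trace_sub_card
  rw [det_smul, trace_smul, smul_eq_mul,
    Real.log_mul (pow_pos hs _).ne' hA.det_pos.ne', Real.log_pow] at this
  linarith

theorem PosDef.log_det_add_log_det_neg_of_add_eq (hA : A.PosDef) (hB : B.PosDef)
    (hAB : A + B = (2 : ℝ) • 1) (hA1 : A ≠ 1) : Real.log A.det + Real.log B.det < 0 := by
  have htrace : A.trace + B.trace = 2 * Fintype.card ι := by
    rw [← trace_add, hAB, trace_smul, trace_one, smul_eq_mul]
  linarith [hA.log_det_lt_trace_sub_card hA1, hB.log_det_le_trace_sub_card]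

theorem PosDef.log_det_add_log_det_lt (hA : A.PosDef) (hB : B.PosDef) (hAB : A ≠ B) :
    Real.log A.det + Real.log B.det < 2 * Real.log ((2⁻¹ : ℝ) • (A + B)).det := by
  set N := (2⁻¹ : ℝ) • (A + B)
  have hN : N.PosDef := (hA.add hB).smul (by norm_num)
  -- a congruence normalizing `N` to `1` reduces the claim to the case `A + B = 2 • 1`
  obtain ⟨P, hP, hPN⟩ := hN.exists_isUnit_conjTranspose_mul_mul_eq_one
  have hPinj : Function.Injective P.mulVec := mulVec_injective_iff_isUnit.mpr hP
  have hdet (M : Matrix ι ι ℝ) : (Pᴴ * M * P).det = M.det * (Pᴴ.det * P.det) := by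
    rw [det_mul, det_mul]; ring
  have hsum : Pᴴ * A * P + Pᴴ * B * P = (2 : ℝ) • 1 := by
    rw [← hPN, ← Matrix.add_mul, ← Matrix.mul_add, Matrix.mul_smul, Matrix.smul_mul,
      smul_inv_smul₀ two_ne_zero]
  have hne : Pᴴ * A * P ≠ 1 := by
    intro hA1
    have hAN : A = N := hP.star.mul_left_cancel (hP.mul_right_cancel (hA1.trans hPN.symm))
    apply hAB
    linear_combination (norm := module) (2 : ℝ) • hAN
  have key := (hA.conjTranspose_mul_mul_same hPinj).log_det_add_log_det_neg_of_add_eq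
    (hB.conjTranspose_mul_mul_same hPinj) hsum hne
  have hd : N.det * (Pᴴ.det * P.det) = 1 := by rw [← hdet, hPN, det_one]
  have hdpos : 0 < Pᴴ.det * P.det := pos_of_mul_pos_right (hd ▸ one_pos) hN.det_pos.le
  rw [hdet, hdet, Real.log_mul hA.det_pos.ne' hdpos.ne', Real.log_mul hB.det_pos.ne' hdpos.ne']
    at key
  have hlogd := congrArg Real.log hd
  rw [Real.log_mul hN.det_pos.ne' hdpos.ne', Real.log_one] at hlogd
  linarith

end DecidableEq

end Matrix

section Maximizer

variable {n : ℕ} {Z : Set (Fin n × Fin n)} {V Θ : Matrix (Fin n) (Fin n) ℝ}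

theorem maxProp.neg_trace_le (hZ : ∀ p ∈ Z, p.1 ≠ p.2) (h : maxProp n Z V Θ) :
    -V.trace ≤ Real.log Θ.det - (V * Θ).trace := by
  simpa using h.2.2 1 PosDef.one fun p hp => one_apply_ne (hZ p hp)

theorem maxProp.exp_neg_trace_le_det (hZ : ∀ p ∈ Z, p.1 ≠ p.2) (h : maxProp n Z V Θ)
    (hVΘ : 0 ≤ (V * Θ).trace) : Real.exp (-V.trace) ≤ Θ.det := by
  rw [← Real.exp_log h.1.det_pos]
  exact Real.exp_le_exp.mpr (by linarith [h.neg_trace_le hZ])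

theorem maxProp.trace_le (hZ : ∀ p ∈ Z, p.1 ≠ p.2) (h : maxProp n Z V Θ) {c : ℝ} (hc : 0 < c)
    (hV : ∀ Θ' : Matrix (Fin n) (Fin n) ℝ, Θ'.PosSemidef → c * Θ'.trace ≤ (V * Θ').trace) :
    c / 2 * Θ.trace ≤ V.trace - n * (1 + Real.log (c / 2)) := by
  have := h.1.log_det_le_mul_trace (half_pos hc)
  rw [Fintype.card_fin] at this
  linarith [h.neg_trace_le hZ, hV Θ h.1.posSemidef]

theorem maxProp.unique {Θ₁ Θ₂ : Matrix (Fin n) (Fin n) ℝ} (h₁ : maxProp n Z V Θ₁)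
    (h₂ : maxProp n Z V Θ₂) : Θ₁ = Θ₂ := by
  by_contra hne
  set N := (2⁻¹ : ℝ) • (Θ₁ + Θ₂)
  have hN : N.PosDef := (h₁.1.add h₂.1).smul (by norm_num)
  have hNZ : ∀ p ∈ Z, N p.1 p.2 = 0 := fun p hp => by simp [N, h₁.2.1 p hp, h₂.2.1 p hp]
  have htrace : (V * N).trace = ((V * Θ₁).trace + (V * Θ₂).trace) / 2 := by
    simp only [N, Matrix.mul_smul, Matrix.mul_add, trace_smul, trace_add, smul_eq_mul]; ring
  have hlog : Real.log Θ₁.det + Real.log Θ₂.det < 2 * Real.log N.det :=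
    h₁.1.log_det_add_log_det_lt h₂.1 hne
  linarith [h₁.2.2 N hN hNZ, h₂.2.2 Θ₁ h₁.1 h₁.2.1]

theorem maxProp.of_tendsto {α : Type*} {l : Filter α} [l.NeBot]
    {Vs Θs : α → Matrix (Fin n) (Fin n) ℝ} (hV : Tendsto Vs l (𝓝 V)) (hΘ : Tendsto Θs l (𝓝 Θ))
    (h : ∀ᶠ a in l, maxProp n Z (Vs a) (Θs a)) (hΘpos : Θ.PosDef) : maxProp n Z V Θ := by
  refine ⟨hΘpos, fun p hp => ?_, fun Θ' hΘ' hΘ'Z => ?_⟩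
  · have hentry : Tendsto (fun a => Θs a p.1 p.2) l (𝓝 (Θ p.1 p.2)) :=
      ((continuous_id.matrix_elem p.1 p.2).tendsto Θ).comp hΘ
    exact tendsto_nhds_unique hentry
      (tendsto_const_nhds.congr' (h.mono fun a ha => (ha.2.1 p hp).symm))
  · have hobj {Θ₀ : Matrix (Fin n) (Fin n) ℝ} {Θs₀ : α → Matrix (Fin n) (Fin n) ℝ}
        (hΘ₀ : Tendsto Θs₀ l (𝓝 Θ₀)) (hdet : Θ₀.det ≠ 0) :
        Tendsto (fun a => Real.log (Θs₀ a).det - (Vs a * Θs₀ a).trace) l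
          (𝓝 (Real.log Θ₀.det - (V * Θ₀).trace)) :=
      (((continuous_id.matrix_det.tendsto _).comp hΘ₀).log hdet).sub
        ((continuous_id.matrix_trace.tendsto _).comp (hV.mul hΘ₀))
    exact le_of_tendsto_of_tendsto (hobj tendsto_const_nhds hΘ'.det_pos.ne')
      (hobj hΘ hΘpos.det_pos.ne') (h.mono fun a ha => ha.2.2 Θ' hΘ' hΘ'Z)

theorem exists_isCompact_eventually_maxProp_mem (hZ : ∀ p ∈ Z, p.1 ≠ p.2) (hV : V.PosDef) :
    ∃ K, IsCompact K ∧ (∀ Θ ∈ K, Θ.PosDef) ∧ ∀ᶠ V' in 𝓝 V, ∀ Θ, maxProp n Z V' Θ → Θ ∈ K := by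
  obtain ⟨c, hc, hVc⟩ := hV.exists_pos_mul_trace_le_trace_mul
  set t := V.trace + 1
  let K := {Θ : Matrix (Fin n) (Fin n) ℝ |
    Θ.PosSemidef ∧ Θ.trace ≤ (t - n * (1 + Real.log (c / 2 / 2))) / (c / 2 / 2)} ∩
    {Θ | Real.exp (-t) ≤ Θ.det}
  refine ⟨K, (isCompact_setOf_posSemidef_trace_le _).inter_right
      (isClosed_le continuous_const continuous_id.matrix_det),
    fun Θ hΘ => hΘ.1.1.posDef_iff_det_ne_zero.mpr ((Real.exp_pos _).trans_le hΘ.2).ne', ?_⟩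
  have htrace : ∀ᶠ V' in 𝓝 V, V'.trace < t :=
    (continuous_id.matrix_trace.tendsto V).eventually (gt_mem_nhds (lt_add_one _))
  filter_upwards [eventually_half_mul_trace_le_trace_mul hc hVc, htrace] with V' hV'c hV't Θ hΘ
  have hΘpsd := hΘ.1.posSemidef
  refine ⟨⟨hΘpsd, ?_⟩, ?_⟩
  · rw [le_div_iff₀ (by positivity), mul_comm]
    linarith [hΘ.trace_le hZ (half_pos hc) hV'c]
  · have hV'Θ : 0 ≤ (V' * Θ).trace :=
      (mul_nonneg (half_pos hc).le hΘpsd.trace_nonneg).trans (hV'c Θ hΘpsd)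
    exact (Real.exp_le_exp.mpr (by linarith)).trans (hΘ.exp_neg_trace_le_det hZ hV'Θ)

end Maximizer

theorem continuousOn_constrained_maximizer_general (n : ℕ)
    (Z : Set (Fin n × Fin n)) (hZoffdiag : ∀ p ∈ Z, p.1 ≠ p.2)
    (h : Matrix (Fin n) (Fin n) ℝ → Matrix (Fin n) (Fin n) ℝ)
    (hh : ∀ V : Matrix (Fin n) (Fin n) ℝ, V.PosDef → maxProp n Z V (h V)) :
    ContinuousOn h {V : Matrix (Fin n) (Fin n) ℝ | V.PosDef} := by
  intro V₀ hV₀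
  obtain ⟨K, hK, hKpos, hmaxK⟩ := exists_isCompact_eventually_maxProp_mem hZoffdiag hV₀
  have hmax : ∀ᶠ V in 𝓝[{V | V.PosDef}] V₀, maxProp n Z V (h V) :=
    eventually_nhdsWithin_of_forall hh
  have hmem : ∀ᶠ V in 𝓝[{V | V.PosDef}] V₀, h V ∈ K :=
    (hmaxK.filter_mono nhdsWithin_le_nhds).and hmax |>.mono fun V hV => hV.1 _ hV.2
  refine hK.tendsto_nhds_of_unique_mapClusterPt hmem fun Θ hΘK hΘ => ?_
  obtain ⟨U, hU, hUΘ⟩ := mapClusterPt_iff_ultrafilter.mp hΘ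
  have hΘmax : maxProp n Z V₀ Θ :=
    .of_tendsto (tendsto_id.mono_left (hU.trans nhdsWithin_le_nhds)) hUΘ (hU hmax) (hKpos Θ hΘK)
  exact hΘmax.unique (hh V₀ hV₀)

/-- The map `h`, sending each positive definite real symmetric `n × n` matrix `V` to the
unique positive definite matrix in `C` maximizing `f(Θ; V) = log det Θ − tr (V Θ)` over
positive definite `Θ ∈ C`, is continuous on the open cone of positive definite matrices. -/
theorem continuousOn_constrained_maximizer (n : ℕ) (hn : 0 < n)
    (Z : Set (Fin n × Fin n)) (hZoffdiag : ∀ p ∈ Z, p.1 ≠ p.2)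
    (hZsymm : ∀ i j : Fin n, (i, j) ∈ Z → (j, i) ∈ Z)
    (h : Matrix (Fin n) (Fin n) ℝ → Matrix (Fin n) (Fin n) ℝ)
    (hh : ∀ V : Matrix (Fin n) (Fin n) ℝ, V.PosDef → maxProp n Z V (h V)) :
    ContinuousOn h {V : Matrix (Fin n) (Fin n) ℝ | V.PosDef} :=
  continuousOn_constrained_maximizer_general n Z hZoffdiag h hh
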